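/- Let X = {s ∈ ℤ^ℕ : |sₙ| → ∞}, ψ(s) = t_s, and fix s ∈ X with t_s < ∞ and m ∈ ℕ. For each n define sⁿ ∈ ℤ^ℕ by sⁿᵢ = sᵢ for i ≠ n and sⁿₙ = min{|sₙ|, m}. Then t_{sⁿ} ≤ t_s for all n, and (t_{sⁿ}, sⁿ) → (t_s, s) in [0,∞) × ℤ^ℕ. -/

import Mathlib

open Filter Topology

/-- One step of the model dynamics `𝓕(t,s) = (eᵗ - 1 - 2π|s₁|, σ s)`. -/
noncomputable def step (p : ℝ × (ℕ → ℤ)) : ℝ × (ℕ → ℤ) :=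
  (Real.exp p.1 - 1 - 2 * Real.pi * |((p.2 1 : ℤ) : ℝ)|, fun n => p.2 (n + 1))

/-- `(t,s) ∈ J(𝓕)`: every iterate has nonnegative first coordinate. -/
noncomputable def inJ (t : ℝ) (s : ℕ → ℤ) : Prop := ∀ n : ℕ, 0 ≤ (step^[n] (t, s)).1

/-- `t_s = inf {t ≥ 0 : (t,s) ∈ J(𝓕)}`, with value `∞` if the set is empty. -/
noncomputable def tmin (s : ℕ → ℤ) : ENNReal := sInf (ENNReal.ofReal '' {t : ℝ | inJ t s})

/-- `X = {s ∈ ℤ^ℕ : |sₙ| → ∞}`. -/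
def Xset : Set (ℕ → ℤ) := {s | Tendsto (fun n => |s n|) atTop atTop}

/-!
The first coordinates of the orbit of `(t, s)` under `𝓕` increase when `t` increases or the entries
of `s` decrease in absolute value, so `t_s` is antitone in `|s|` and `t_{sⁿ} ≤ t_s`. The `k`-th
iterate depends continuously on `t` and only on `s₁, …, s_k`; hence `{t | (t, s) ∈ J(𝓕)}` is closed
(the infimum `t_s` is attained) and any limit `s` of sequences `s'` with `t_{s'} ≤ a` has `t_s ≤ a`,
i.e. `t_s` is lower semicontinuous. As `sⁿ` differs from `s` only at index `n`, `sⁿ → s`, and the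
two bounds squeeze `t_{sⁿ}` to `t_s`.
-/

lemma step_iter_fst_le_of_abs_le (k : ℕ) {t t' : ℝ} {s s' : ℕ → ℤ} (ht : t ≤ t')
    (hs : ∀ i, |s' i| ≤ |s i|) : (step^[k] (t, s)).1 ≤ (step^[k] (t', s')).1 := by
  induction k generalizing t t' s s' with
  | zero => exact ht
  | succ k ih =>
    rw [Function.iterate_succ_apply, Function.iterate_succ_apply]
    refine ih ?_ fun i => hs (i + 1)
    show Real.exp t - 1 - 2 * Real.pi * |((s 1 : ℤ) : ℝ)| ≤
      Real.exp t' - 1 - 2 * Real.pi * |((s' 1 : ℤ) : ℝ)|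
    gcongr ?_ - 1 - 2 * Real.pi * ?_
    · exact Real.exp_le_exp.2 ht
    · exact_mod_cast hs 1

lemma step_iter_fst_congr (k : ℕ) (t : ℝ) {s s' : ℕ → ℤ} (hs : Set.EqOn s s' (Set.Icc 1 k)) :
    (step^[k] (t, s)).1 = (step^[k] (t, s')).1 := by
  induction k generalizing t s s' with
  | zero => rfl
  | succ k ih =>
    rw [Function.iterate_succ_apply, Function.iterate_succ_apply]
    have h1 : s 1 = s' 1 := hs ⟨le_rfl, Nat.le_add_left 1 k⟩
    simp only [step, h1]
    exact ih _ fun i hi => hs ⟨Nat.le_add_left 1 i, Nat.add_le_add_right hi.2 1⟩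

lemma continuous_step_iter_fst (k : ℕ) (s : ℕ → ℤ) :
    Continuous fun t => (step^[k] (t, s)).1 := by
  induction k generalizing s with
  | zero => exact continuous_id
  | succ k ih =>
    change Continuous fun t =>
      (step^[k] (Real.exp t - 1 - 2 * Real.pi * |((s 1 : ℤ) : ℝ)|, fun n => s (n + 1))).1
    exact (ih _).comp (by fun_prop)

lemma inJ.nonneg {t : ℝ} {s : ℕ → ℤ} (h : inJ t s) : 0 ≤ t := h 0

lemma inJ.mono {t t' : ℝ} {s s' : ℕ → ℤ} (h : inJ t s) (ht : t ≤ t')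
    (hs : ∀ i, |s' i| ≤ |s i|) : inJ t' s' :=
  fun k => (h k).trans (step_iter_fst_le_of_abs_le k ht hs)

lemma isClosed_setOf_inJ (s : ℕ → ℤ) : IsClosed {t : ℝ | inJ t s} := by
  simp only [inJ, Set.ofPred_forall]
  exact isClosed_iInter fun k => isClosed_le continuous_const (continuous_step_iter_fst k s)

lemma tmin_le_ofReal {t : ℝ} {s : ℕ → ℤ} (h : inJ t s) : tmin s ≤ ENNReal.ofReal t :=
  sInf_le ⟨t, h, rfl⟩

lemma inJ_toReal_tmin {s : ℕ → ℤ} (h : tmin s ≠ ⊤) : inJ (tmin s).toReal s := by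
  set T := {t : ℝ | inJ t s}
  have hne : T.Nonempty := by
    by_contra hT
    simp [tmin, T, Set.not_nonempty_iff_eq_empty.1 hT] at h
  have hbdd : BddBelow T := ⟨0, fun _ ht => inJ.nonneg ht⟩
  have hmem : sInf T ∈ T := (isClosed_setOf_inJ s).csInf_mem hne hbdd
  have htmin : tmin s = ENNReal.ofReal (sInf T) := by
    refine le_antisymm (tmin_le_ofReal hmem) (le_sInf ?_)
    rintro _ ⟨t, ht, rfl⟩
    exact ENNReal.ofReal_le_ofReal (csInf_le hbdd ht)
  rwa [htmin, ENNReal.toReal_ofReal (inJ.nonneg hmem)]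

lemma tmin_le_tmin_of_abs_le {s s' : ℕ → ℤ} (hs : ∀ i, |s' i| ≤ |s i|) : tmin s' ≤ tmin s :=
  sInf_le_sInf (Set.image_mono fun _ ht => inJ.mono ht le_rfl hs)

lemma eventually_nhds_eqOn_of_finite {ι α : Type*} [TopologicalSpace α] [DiscreteTopology α]
    {I : Set ι} (hI : I.Finite) (f : ι → α) : ∀ᶠ g in 𝓝 f, Set.EqOn f g I :=
  hI.eventually_all.2 fun i _ =>
    ((continuous_apply i).tendsto f).eventually ((isOpen_discrete {f i}).mem_nhds rfl)
      |>.mono fun _ h => h.symm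

lemma lowerSemicontinuous_tmin : LowerSemicontinuous tmin := by
  intro s a ha
  by_contra hfreq
  rw [not_eventually] at hfreq
  have ha_top : a ≠ ⊤ := ha.ne_top
  suffices inJ a.toReal s from
    ha.not_ge (by simpa [ENNReal.ofReal_toReal ha_top] using tmin_le_ofReal this)
  intro k
  obtain ⟨s', hs'a, hs's⟩ :=
    (hfreq.and_eventually (eventually_nhds_eqOn_of_finite (Set.finite_Icc 1 k) s)).exists
  replace hs'a : tmin s' ≤ a := not_lt.1 hs'a
  have hJ : inJ a.toReal s' :=
    (inJ_toReal_tmin (ne_top_of_le_ne_top ha_top hs'a)).mono (ENNReal.toReal_mono ha_top hs'a)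
      fun _ => le_rfl
  rw [step_iter_fst_congr k _ hs's]
  exact hJ k

lemma tendsto_of_lowerSemicontinuousAt_of_le {α β γ : Type*} [TopologicalSpace α]
    [LinearOrder γ] [TopologicalSpace γ] [OrderTopology γ] {f : α → γ} {x : α} {l : Filter β}
    {u : β → α} (hf : LowerSemicontinuousAt f x) (hu : Tendsto u l (𝓝 x))
    (hle : ∀ b, f (u b) ≤ f x) : Tendsto (f ∘ u) l (𝓝 (f x)) :=
  tendsto_order.2 ⟨fun a ha => hu.eventually (hf a ha),
    fun _ hb => Eventually.of_forall fun b => (hle b).trans_lt hb⟩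

theorem modified_tmin_tendsto_general (s : ℕ → ℤ) (m : ℕ) :
    (∀ n : ℕ, tmin (fun i => if i = n then min |s n| (m : ℤ) else s i) ≤ tmin s) ∧
    Tendsto (fun n : ℕ =>
        ((tmin (fun i => if i = n then min |s n| (m : ℤ) else s i)),
          (fun i => if i = n then min |s n| (m : ℤ) else s i)))
      atTop (𝓝 (tmin s, s)) := by
  set u : ℕ → ℕ → ℤ := fun n i => if i = n then min |s n| (m : ℤ) else s i
  have hu_abs : ∀ n i, |u n i| ≤ |s i| := by
    intro n i
    by_cases hi : i = n
    · subst hi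
      simp only [u, if_pos rfl, abs_of_nonneg (le_min (abs_nonneg _) (Int.natCast_nonneg m))]
      exact min_le_left _ _
    · simp only [u, if_neg hi, le_rfl]
  have hle : ∀ n, tmin (u n) ≤ tmin s := fun n => tmin_le_tmin_of_abs_le (hu_abs n)
  have hu : Tendsto u atTop (𝓝 s) := tendsto_pi_nhds.2 fun i =>
    tendsto_const_nhds.congr' <| (eventually_gt_atTop i).mono fun n hn => by simp [u, hn.ne]
  exact ⟨hle,
    (tendsto_of_lowerSemicontinuousAt_of_le (lowerSemicontinuous_tmin s) hu hle).prodMk_nhds hu⟩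

/-- For `s ∈ X` with `t_s < ∞` and `m ∈ ℕ`, the modifications `sⁿ` (with `sⁿₙ = min{|sₙ|, m}`
and `sⁿᵢ = sᵢ` otherwise) satisfy `t_{sⁿ} ≤ t_s` and `(t_{sⁿ}, sⁿ) → (t_s, s)`. -/
theorem modified_tmin_tendsto (s : ℕ → ℤ) (hs : s ∈ Xset) (hfin : tmin s < ⊤) (m : ℕ) :
    (∀ n : ℕ, tmin (fun i => if i = n then min |s n| (m : ℤ) else s i) ≤ tmin s) ∧
    Tendsto (fun n : ℕ =>
        ((tmin (fun i => if i = n then min |s n| (m : ℤ) else s i)),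
          (fun i => if i = n then min |s n| (m : ℤ) else s i)))
      atTop (𝓝 (tmin s, s)) :=
  modified_tmin_tendsto_general s m
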